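/- arXiv:1706.06433 — 4 statements merged into one kernel-verified Lean document; each statement's English description precedes it below -/
import Mathlib

section
/- Suppose λ ∈ (0,1). Then the state-evolution fixed-point equation x = c + λ ∫ βx/(β+x) dμ(β) has exactly one solution x in [0, ∞); that is, there exists a unique x ≥ 0 with G(x) = x. -/
open MeasureTheory

lemma F_bound {x β : ℝ} (hx : 0 ≤ x) (hβ : 0 ≤ β) : |β * x / (β + x)| ≤ x := by
  rcases eq_or_lt_of_le (add_nonneg hβ hx) with h | h
  · rw [← h, div_zero, abs_zero]; exact hx
  · rw [abs_of_nonneg (div_nonneg (mul_nonneg hβ hx) h.le), div_le_iff₀ h]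
    nlinarith [sq_nonneg x]

lemma F_lip {x y β : ℝ} (hx : 0 ≤ x) (hy : 0 ≤ y) (hβ : 0 ≤ β) :
    |β * x / (β + x) - β * y / (β + y)| ≤ |x - y| := by
  rcases eq_or_lt_of_le hβ with h | h
  · simp [← h]
  · have hbx : 0 < β + x := by linarith
    have hby : 0 < β + y := by linarith
    have key : β * x / (β + x) - β * y / (β + y) = β ^ 2 * (x - y) / ((β + x) * (β + y)) := by
      field_simp; ring
    rw [key, abs_div, abs_of_pos (mul_pos hbx hby), div_le_iff₀ (mul_pos hbx hby), abs_mul,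
      abs_of_nonneg (sq_nonneg β)]
    nlinarith [abs_nonneg (x - y), mul_nonneg hx hy, mul_nonneg h.le hx, mul_nonneg h.le hy,
      mul_nonneg (abs_nonneg (x - y)) (mul_nonneg h.le hx),
      mul_nonneg (abs_nonneg (x - y)) (mul_nonneg h.le hy),
      mul_nonneg (abs_nonneg (x - y)) (mul_nonneg hx hy)]

lemma F_meas (x : ℝ) : Measurable (fun β : ℝ => β * x / (β + x)) :=
  (measurable_id.mul_const x).div (measurable_id.add_const x)

lemma F_int (μ : Measure ℝ) [IsProbabilityMeasure μ] (hμ : ∀ᵐ β ∂μ, 0 ≤ β)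
    {x : ℝ} (hx : 0 ≤ x) : Integrable (fun β : ℝ => β * x / (β + x)) μ := by
  refine Integrable.mono' (integrable_const x) (F_meas x).aestronglyMeasurable ?_
  filter_upwards [hμ] with β hβ
  rw [Real.norm_eq_abs]
  exact F_bound hx hβ

lemma g_dist (μ : Measure ℝ) [IsProbabilityMeasure μ] (hμ : ∀ᵐ β ∂μ, 0 ≤ β)
    {x y : ℝ} (hx : 0 ≤ x) (hy : 0 ≤ y) :
    |(∫ β, β * x / (β + x) ∂μ) - ∫ β, β * y / (β + y) ∂μ| ≤ |x - y| := by
  have h1 := F_int μ hμ hx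
  have h2 := F_int μ hμ hy
  rw [← integral_sub h1 h2]
  calc |∫ β, (β * x / (β + x) - β * y / (β + y)) ∂μ|
      ≤ ∫ β, |β * x / (β + x) - β * y / (β + y)| ∂μ := by
        simpa [Real.norm_eq_abs] using
          norm_integral_le_integral_norm (μ := μ)
            (f := fun β : ℝ => β * x / (β + x) - β * y / (β + y))
    _ ≤ ∫ _β, |x - y| ∂μ := by
        refine integral_mono_ae ((h1.sub h2).abs) (integrable_const _) ?_
        filter_upwards [hμ] with β hβ
        exact F_lip hx hy hβ
    _ = |x - y| := by simp

/-- For a Borel probability measure `μ` on `[0,∞)`, a constant `c > 0`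
and `λ ∈ (0,1)`, the state-evolution fixed-point equation
`x = c + λ ∫ βx/(β+x) dμ(β)` has exactly one solution `x ∈ [0,∞)`. -/
theorem state_evolution_unique_fixed_point
    (μ : Measure ℝ) [IsProbabilityMeasure μ] (hμ : ∀ᵐ β ∂μ, 0 ≤ β)
    (c : ℝ) (hc : 0 < c) (lam : ℝ) (hlam : lam ∈ Set.Ioo (0 : ℝ) 1) :
    ∃! x : ℝ, 0 ≤ x ∧ c + lam * ∫ β, β * x / (β + x) ∂μ = x := by
  obtain ⟨hl0, hl1⟩ := hlam
  set g : ℝ → ℝ := fun x => c + lam * ∫ β, β * x / (β + x) ∂μ with hg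
  have hg0 : g 0 = c := by simp [hg]
  have hgdist : ∀ x y : ℝ, 0 ≤ x → 0 ≤ y → |g x - g y| ≤ lam * |x - y| := by
    intro x y hx hy
    have := g_dist μ hμ hx hy
    have h2 : g x - g y = lam * ((∫ β, β * x / (β + x) ∂μ) - ∫ β, β * y / (β + y) ∂μ) := by
      simp [hg]; ring
    rw [h2, abs_mul, abs_of_pos hl0]
    exact mul_le_mul_of_nonneg_left this hl0.le
  set M : ℝ := (c + 1) / (1 - lam) with hM
  have hM0 : 0 ≤ M := div_nonneg (by linarith) (by linarith)
  have hMeq : (1 - lam) * M = c + 1 := by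
    rw [hM, mul_comm, div_mul_cancel₀ _ (by linarith : (1:ℝ) - lam ≠ 0)]
  -- continuity of h := g - id on [0, M]
  have hcont : ContinuousOn (fun x => g x - x) (Set.Icc 0 M) := by
    have : LipschitzOnWith (Real.toNNReal lam) g (Set.Icc 0 M) := by
      refine LipschitzOnWith.of_dist_le_mul fun x hx y hy => ?_
      rw [Real.dist_eq, Real.dist_eq]
      have := hgdist x y hx.1 hy.1
      rwa [Real.coe_toNNReal _ hl0.le]
    exact (this.continuousOn).sub continuousOn_id
  have hhM : g M - M ≤ -1 := by
    have h1 : |g M - g 0| ≤ lam * |M - 0| := hgdist M 0 hM0 le_rfl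
    have h2 : g M ≤ c + lam * M := by
      rw [hg0] at h1
      have := (abs_le.mp h1).2
      rw [sub_zero, abs_of_nonneg hM0] at this
      linarith
    nlinarith
  have hh0 : (0 : ℝ) ∈ Set.Icc (g M - M) (g 0 - 0) := by
    constructor
    · linarith
    · rw [hg0]; linarith
  have := intermediate_value_Icc' hM0 hcont hh0
  obtain ⟨x, hxmem, hxval⟩ := this
  simp only at hxval
  have hxfix : g x = x := sub_eq_zero.mp hxval
  refine ⟨x, ⟨hxmem.1, hxfix⟩, ?_⟩
  rintro y ⟨hy0, hyfix⟩
  have hgy : g y = y := hyfix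
  have := hgdist y x hy0 hxmem.1
  rw [hgy, hxfix] at this
  have habs : |y - x| ≤ lam * |y - x| := this
  have : |y - x| = 0 := by nlinarith [abs_nonneg (y - x)]
  have := abs_eq_zero.mp this
  linarith
end

section
/- Suppose λ ∈ (0,1) and μ is supported on [β_min, ∞) for some β_min > 0. For each c > 0 let τ(c) denote the unique nonnegative solution of x = c + λ ∫ βx/(β+x) dμ(β). Then τ(c)/c → 1/(1−λ) as c → 0⁺; that is, in the high-SNR limit the fixed point of the state evolution is asymptotic to c/(1−λ). -/
/-!
Since `β x / (β + x) = x - x² / (β + x)` lies between `x - x² / β_min` and `x` for `β ≥ β_min`,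
the fixed-point equation gives `(1 - λ) τ ≤ c ≤ (1 - λ) τ + λ τ² / β_min`. The first inequality
shows `τ = O(c)`, so the second becomes `c / (1 - λ) - O(c²) ≤ τ`, and `τ / c` is squeezed
between `1 / (1 - λ) - O(c)` and `1 / (1 - λ)`.
-/

open MeasureTheory Filter Topology

lemma mul_div_add_le_right {β t : ℝ} (hβ : 0 ≤ β) (ht : 0 ≤ t) : β * t / (β + t) ≤ t := by
  rcases (add_nonneg hβ ht).eq_or_lt with h | h
  · rw [← h, div_zero]
    exact ht
  · rw [div_le_iff₀ h]
    nlinarith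

lemma sub_sq_div_le_mul_div_add {b β t : ℝ} (hb : 0 < b) (hbβ : b ≤ β) (ht : 0 ≤ t) :
    t - t ^ 2 / b ≤ β * t / (β + t) := by
  have hβt : 0 < β + t := by linarith
  calc t - t ^ 2 / b ≤ t - t ^ 2 / (β + t) := by gcongr; linarith
    _ = β * t / (β + t) := by field_simp; ring

section Integral

variable {μ : Measure ℝ} {t : ℝ}

lemma integrable_mul_div_add [IsFiniteMeasure μ] (hμ : ∀ᵐ β ∂μ, 0 ≤ β) (ht : 0 ≤ t) :
    Integrable (fun β => β * t / (β + t)) μ := by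
  refine Integrable.mono' (integrable_const t)
    ((measurable_id.mul_const t).div (measurable_id.add_const t)).aestronglyMeasurable ?_
  filter_upwards [hμ] with β hβ
  rw [Real.norm_of_nonneg (div_nonneg (mul_nonneg hβ ht) (add_nonneg hβ ht))]
  exact mul_div_add_le_right hβ ht

variable [IsProbabilityMeasure μ]

lemma integral_mul_div_add_le (hμ : ∀ᵐ β ∂μ, 0 ≤ β) (ht : 0 ≤ t) :
    ∫ β, β * t / (β + t) ∂μ ≤ t := by
  calc ∫ β, β * t / (β + t) ∂μ ≤ ∫ _, t ∂μ :=
        integral_mono_ae (integrable_mul_div_add hμ ht) (integrable_const t)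
          (hμ.mono fun β hβ => mul_div_add_le_right hβ ht)
    _ = t := by simp

lemma sub_sq_div_le_integral_mul_div_add {b : ℝ} (hb : 0 < b) (hμ : ∀ᵐ β ∂μ, b ≤ β)
    (ht : 0 ≤ t) : t - t ^ 2 / b ≤ ∫ β, β * t / (β + t) ∂μ := by
  have hμ₀ : ∀ᵐ β ∂μ, 0 ≤ β := hμ.mono fun β hβ => hb.le.trans hβ
  calc t - t ^ 2 / b = ∫ _, t - t ^ 2 / b ∂μ := by simp
    _ ≤ ∫ β, β * t / (β + t) ∂μ :=
        integral_mono_ae (integrable_const _) (integrable_mul_div_add hμ₀ ht)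
          (hμ.mono fun β hβ => sub_sq_div_le_mul_div_add hb hβ ht)

end Integral

section FixedPoint

variable {lam b c t I : ℝ}

lemma le_div_one_sub_of_eq_add_mul (hlam₀ : 0 ≤ lam) (hlam₁ : lam < 1)
    (hfix : t = c + lam * I) (hI : I ≤ t) : t ≤ c / (1 - lam) := by
  rw [le_div_iff₀ (by linarith)]
  nlinarith

lemma one_div_one_sub_sub_le_div_of_eq_add_mul (hlam₀ : 0 ≤ lam) (hlam₁ : lam < 1) (hb : 0 < b)
    (hc : 0 < c) (ht : 0 ≤ t) (hfix : t = c + lam * I) (hI : t - t ^ 2 / b ≤ I)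
    (htc : t ≤ c / (1 - lam)) :
    1 / (1 - lam) - lam * c / ((1 - lam) ^ 3 * b) ≤ t / c := by
  have h1lam : 0 < 1 - lam := by linarith
  have hsq : lam * t ^ 2 / b ≤ lam * (c / (1 - lam)) ^ 2 / b := by gcongr
  have hlow : c - lam * (c / (1 - lam)) ^ 2 / b ≤ (1 - lam) * t := by
    have := mul_le_mul_of_nonneg_left hI hlam₀
    rw [mul_sub, ← mul_div_assoc] at this
    linarith
  rw [le_div_iff₀ hc]
  calc (1 / (1 - lam) - lam * c / ((1 - lam) ^ 3 * b)) * c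
        = (c - lam * (c / (1 - lam)) ^ 2 / b) / (1 - lam) := by field_simp
    _ ≤ t := by rw [div_le_iff₀ h1lam]; linarith

end FixedPoint

/-- Suppose `λ ∈ (0,1)` and `μ` is a probability measure supported on
`[β_min, ∞)` with `β_min > 0`. For each `c > 0` let `τ c` be the unique nonnegative
solution of `x = c + λ ∫ βx/(β+x) dμ(β)`. Then `τ(c)/c → 1/(1-λ)` as `c → 0⁺`. -/
theorem state_evolution_high_SNR_limit
    (μ : Measure ℝ) [IsProbabilityMeasure μ]
    (βmin : ℝ) (hβmin : 0 < βmin) (hμ : ∀ᵐ β ∂μ, βmin ≤ β)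
    (lam : ℝ) (hlam : lam ∈ Set.Ioo (0 : ℝ) 1)
    (τ : ℝ → ℝ)
    (hτ : ∀ c : ℝ, 0 < c →
      (0 ≤ τ c ∧ τ c = c + lam * ∫ β, β * τ c / (β + τ c) ∂μ) ∧
      (∀ y : ℝ, 0 ≤ y → y = c + lam * ∫ β, β * y / (β + y) ∂μ → y = τ c)) :
    Filter.Tendsto (fun c => τ c / c) (nhdsWithin 0 (Set.Ioi 0))
      (nhds (1 / (1 - lam))) := by
  obtain ⟨hlam₀, hlam₁⟩ := hlam
  have hμ₀ : ∀ᵐ β ∂μ, 0 ≤ β := hμ.mono fun β hβ => hβmin.le.trans hβ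
  have hupper : ∀ c, 0 < c → τ c ≤ c / (1 - lam) := fun c hc =>
    le_div_one_sub_of_eq_add_mul hlam₀.le hlam₁ (hτ c hc).1.2
      (integral_mul_div_add_le hμ₀ (hτ c hc).1.1)
  have hlower_lim : Tendsto (fun c => 1 / (1 - lam) - lam * c / ((1 - lam) ^ 3 * βmin))
      (𝓝[>] 0) (𝓝 (1 / (1 - lam))) := by
    have hcont : Continuous fun c : ℝ => 1 / (1 - lam) - lam * c / ((1 - lam) ^ 3 * βmin) := by
      fun_prop
    simpa using tendsto_nhdsWithin_of_tendsto_nhds (hcont.tendsto 0)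
  refine tendsto_of_tendsto_of_tendsto_of_le_of_le' hlower_lim tendsto_const_nhds ?_ ?_
  · filter_upwards [self_mem_nhdsWithin] with c (hc : 0 < c)
    exact one_div_one_sub_sub_le_div_of_eq_add_mul hlam₀.le hlam₁ hβmin hc (hτ c hc).1.1
      (hτ c hc).1.2 (sub_sq_div_le_integral_mul_div_add hβmin hμ (hτ c hc).1.1) (hupper c hc)
  · filter_upwards [self_mem_nhdsWithin] with c (hc : 0 < c)
    calc τ c / c ≤ c / (1 - lam) / c := by gcongr; exact hupper c hc
      _ = 1 / (1 - lam) := by field_simp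
end

section
/- There exists a unique Γ > 0 satisfying the equation Γ = 1 / ( μ₀ ∫ β²/(β + t + β²Γ) dν(β) + μ₀ ∫ βt/(β + t) dν(β) ); equivalently, there is a unique Γ > 0 with Γ·( μ₀ ∫ β²/(β + t + β²Γ) dν(β) + μ₀ ∫ βt/(β + t) dν(β) ) = 1. -/
/-!
Multiplied out, the left-hand side is `μ₀ ∫ β²Γ/(β + t + β²Γ) dν + μ₀ C Γ` with
`C = ∫ βt/(β + t) dν > 0`. Each integrand `s/(c + s)` of the first term lies in `[0, 1]` and is
nondecreasing in `s ≥ 0`, so by dominated convergence the first term is continuous and monotone on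
`Γ ≥ 0` and vanishes at `0`; adding the strictly increasing unbounded `μ₀ C Γ` gives a strictly
increasing continuous function from `0` past `1`, which takes the value `1` exactly once.
-/

open MeasureTheory Set

theorem existsUnique_pos_add_mul_eq {f : ℝ → ℝ} {k y : ℝ}
    (hf_cont : ContinuousOn f (Ici 0)) (hf_mono : MonotoneOn f (Ici 0)) (hf_zero : f 0 = 0)
    (hk : 0 < k) (hy : 0 < y) :
    ∃! x, 0 < x ∧ f x + k * x = y := by
  set g : ℝ → ℝ := fun x => f x + k * x
  have hyk : 0 < y / k := div_pos hy hk
  have hg_strict : StrictMonoOn g (Ici 0) := fun a ha b hb hab =>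
    add_lt_add_of_le_of_lt (hf_mono ha hb hab.le) (mul_lt_mul_of_pos_left hab hk)
  have hg_zero : g 0 = 0 := by simp [g, hf_zero]
  have hg_bound : y ≤ g (y / k) := by
    have : f 0 ≤ f (y / k) := hf_mono self_mem_Ici hyk.le hyk.le
    simp only [g, mul_div_cancel₀ y hk.ne']
    linarith
  have hg_cont : ContinuousOn g (Icc 0 (y / k)) :=
    (hf_cont.mono Icc_subset_Ici_self).add (continuousOn_const.mul continuousOn_id)
  obtain ⟨x, hx, hgx⟩ := intermediate_value_Icc hyk.le hg_cont
    ⟨hg_zero.le.trans hy.le, hg_bound⟩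
  have hx_pos : 0 < x := hx.1.lt_of_ne <| by rintro rfl; exact hy.ne' (hg_zero ▸ hgx).symm
  refine ⟨x, ⟨hx_pos, hgx⟩, fun x' ⟨hx'_pos, hgx'⟩ => ?_⟩
  exact hg_strict.injOn (mem_Ici.2 hx'_pos.le) (mem_Ici.2 hx.1) (hgx'.trans hgx.symm)

theorem integral_pos_of_ae_pos {α : Type*} [MeasurableSpace α] {ν : Measure α} [NeZero ν]
    {f : α → ℝ} (hfi : Integrable f ν) (hf : ∀ᵐ x ∂ν, 0 < f x) : 0 < ∫ x, f x ∂ν := by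
  refine (integral_pos_iff_support_of_nonneg_ae (hf.mono fun _ hx => hx.le) hfi).2 ?_
  refine pos_iff_ne_zero.2 fun h_null => ?_
  obtain ⟨x, hx_pos, hx_out⟩ := (hf.and (measure_eq_zero_iff_ae_notMem.1 h_null)).exists
  exact hx_out hx_pos.ne'

section Saturation

variable {a c : ℝ}

theorem abs_mul_div_add_mul_le_one (ha : 0 ≤ a) (hc : 0 < c) {Γ : ℝ} (hΓ : 0 ≤ Γ) :
    |a * Γ / (c + a * Γ)| ≤ 1 := by
  have hden : 0 < c + a * Γ := by positivity
  rw [abs_of_nonneg (by positivity), div_le_one hden]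
  linarith

theorem monotoneOn_mul_div_add_mul (ha : 0 ≤ a) (hc : 0 < c) :
    MonotoneOn (fun Γ => a * Γ / (c + a * Γ)) (Ici 0) := by
  intro Γ (hΓ : 0 ≤ Γ) Γ' (hΓ' : 0 ≤ Γ') hle
  rw [div_le_div_iff₀ (by positivity) (by positivity)]
  nlinarith [mul_le_mul_of_nonneg_left hle (mul_nonneg ha hc.le)]

theorem continuousOn_mul_div_add_mul (ha : 0 ≤ a) (hc : 0 < c) :
    ContinuousOn (fun Γ => a * Γ / (c + a * Γ)) (Ici 0) :=
  (continuousOn_const.mul continuousOn_id).div (continuousOn_const.add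
    (continuousOn_const.mul continuousOn_id)) fun Γ (hΓ : 0 ≤ Γ) => by positivity

end Saturation

section SaturationIntegral

variable {α : Type*} [MeasurableSpace α] {ν : Measure α} {a c : α → ℝ}

/-- For `a β = β²` and `c β = β + t` this is `Γ` times the first integral in the equation
for `Γ`. -/
noncomputable def saturationIntegral (ν : Measure α) (a c : α → ℝ) (Γ : ℝ) : ℝ :=
  ∫ x, a x * Γ / (c x + a x * Γ) ∂ν

@[simp]
theorem saturationIntegral_zero : saturationIntegral ν a c 0 = 0 := by
  simp [saturationIntegral]

theorem saturationIntegral_eq_mul_integral (Γ : ℝ) :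
    saturationIntegral ν a c Γ = Γ * ∫ x, a x / (c x + a x * Γ) ∂ν := by
  rw [saturationIntegral, mul_comm Γ, ← integral_mul_const]
  simp only [div_mul_eq_mul_div]

variable (ha_meas : AEMeasurable a ν) (hc_meas : AEMeasurable c ν)
  (ha : ∀ᵐ x ∂ν, 0 ≤ a x) (hc : ∀ᵐ x ∂ν, 0 < c x)
include ha_meas hc_meas ha hc

variable [IsFiniteMeasure ν]

theorem integrable_saturation {Γ : ℝ} (hΓ : 0 ≤ Γ) :
    Integrable (fun x => a x * Γ / (c x + a x * Γ)) ν := by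
  refine (integrable_const (1 : ℝ)).mono' ?_ ?_
  · exact ((ha_meas.mul_const Γ).div (hc_meas.add (ha_meas.mul_const Γ))).aestronglyMeasurable
  · filter_upwards [ha, hc] with x hax hcx
    exact abs_mul_div_add_mul_le_one hax hcx hΓ

theorem monotoneOn_saturationIntegral : MonotoneOn (saturationIntegral ν a c) (Ici 0) :=
  fun Γ hΓ Γ' hΓ' hle =>
    integral_mono_ae (integrable_saturation ha_meas hc_meas ha hc hΓ)
      (integrable_saturation ha_meas hc_meas ha hc hΓ') <| by
      filter_upwards [ha, hc] with x hax hcx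
      exact monotoneOn_mul_div_add_mul hax hcx hΓ hΓ' hle

theorem continuousOn_saturationIntegral : ContinuousOn (saturationIntegral ν a c) (Ici 0) := by
  refine continuousOn_of_dominated
    (fun Γ hΓ => (integrable_saturation ha_meas hc_meas ha hc hΓ).aestronglyMeasurable)
    (fun Γ hΓ => ?_) (integrable_const (1 : ℝ)) ?_
  · filter_upwards [ha, hc] with x hax hcx
    exact abs_mul_div_add_mul_le_one hax hcx hΓ
  · filter_upwards [ha, hc] with x hax hcx
    exact continuousOn_mul_div_add_mul hax hcx

end SaturationIntegral

/-- There exists a unique `Γ > 0` with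
`Γ ( μ₀ ∫ β²/(β+t+β²Γ) dν + μ₀ ∫ βt/(β+t) dν ) = 1`. -/
theorem mmse_sinr_Gamma_exists_unique
    (ν : Measure ℝ) [IsProbabilityMeasure ν]
    (βmin : ℝ) (hβmin : 0 < βmin) (hν : ∀ᵐ β ∂ν, βmin ≤ β)
    (μ₀ : ℝ) (hμ₀ : 0 < μ₀) (t : ℝ) (ht : 0 < t) :
    ∃! Γ : ℝ, 0 < Γ ∧
      Γ * (μ₀ * ∫ β, β ^ 2 / (β + t + β ^ 2 * Γ) ∂ν
            + μ₀ * ∫ β, β * t / (β + t) ∂ν) = 1 := by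
  have hβ_pos : ∀ᵐ β ∂ν, 0 < β := hν.mono fun β hβ => hβmin.trans_le hβ
  have hC_int : Integrable (fun β => β * t / (β + t)) ν := by
    refine (integrable_const t).mono'
      (by fun_prop : Measurable fun β : ℝ => β * t / (β + t)).aestronglyMeasurable ?_
    filter_upwards [hβ_pos] with β hβ
    rw [Real.norm_of_nonneg (by positivity), div_le_iff₀ (by positivity)]
    nlinarith
  set C := ∫ β, β * t / (β + t) ∂ν
  have hC : 0 < C :=
    integral_pos_of_ae_pos hC_int (hβ_pos.mono fun β hβ => by positivity)
  have hc : ∀ᵐ β ∂ν, 0 < β + t := hβ_pos.mono fun β hβ => by positivity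
  have ha : ∀ᵐ β ∂ν, 0 ≤ β ^ 2 := ae_of_all _ fun β => sq_nonneg β
  have hS_cont := continuousOn_saturationIntegral (by fun_prop) (by fun_prop) ha hc
  have hS_mono := monotoneOn_saturationIntegral (by fun_prop) (by fun_prop) ha hc
  have h_eq (Γ : ℝ) : Γ * (μ₀ * ∫ β, β ^ 2 / (β + t + β ^ 2 * Γ) ∂ν
      + μ₀ * C) = μ₀ * saturationIntegral ν (· ^ 2) (· + t) Γ + μ₀ * C * Γ := by
    rw [saturationIntegral_eq_mul_integral]
    ring
  simp_rw [h_eq]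
  exact existsUnique_pos_add_mul_eq (continuousOn_const.mul hS_cont)
    ((monotone_mul_left_of_nonneg hμ₀.le).comp_monotoneOn hS_mono) (by simp) (mul_pos hμ₀ hC)
    one_pos
end

section
/- The sum-rate function g(L) = ((T − L)/T) · Σ_{k ∈ K} log₂( 1 + β_k² / ( c·(β_k + s/(L − K₀)) ) ), regarded as a function of a real variable L, is strictly concave on the open interval (K₀, T). -/
/-!
Write `g(L) = (T - L) * h(L)`. The averaged rate `h` is concave and strictly increasing on
`(K₀, T)`: up to an additive constant each SINR is a negative multiple of
`(β_k (L - K₀) + s)⁻¹`, and `log₂` is concave and increasing. Against the positive decreasing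
factor `T - L` this gives strict concavity, since for `z = a x + b y` with `a + b = 1`,
`a (T - x) h(x) + b (T - y) h(y) = (T - z) (a h(x) + b h(y)) - a b (x - y) (h(x) - h(y))`,
and the last term is strictly positive when `x ≠ y`.
-/

open Set Real

section Concavity

variable {𝕜 E α β : Type*} [Semiring 𝕜] [PartialOrder 𝕜] [AddCommMonoid E] [SMul 𝕜 E]
  {s : Set E}

theorem ConcaveOn.comp_of_mapsTo [AddCommMonoid α] [PartialOrder α] [SMul 𝕜 α]
    [AddCommMonoid β] [PartialOrder β] [SMul 𝕜 β] {t : Set β} {f : E → β} {g : β → α}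
    (hg : ConcaveOn 𝕜 t g) (hg' : MonotoneOn g t) (hf : ConcaveOn 𝕜 s f) (hst : MapsTo f s t) :
    ConcaveOn 𝕜 s (g ∘ f) :=
  ⟨hf.1, fun _ hx _ hy _ _ ha hb hab =>
    (hg.2 (hst hx) (hst hy) ha hb hab).trans <|
      hg' (hg.1 (hst hx) (hst hy) ha hb hab) (hst (hf.1 hx hy ha hb hab)) (hf.2 hx hy ha hb hab)⟩

theorem ConcaveOn.finset_sum [IsOrderedRing 𝕜] {ι : Type*} {f : ι → E → 𝕜} (u : Finset ι)
    (hs : Convex 𝕜 s) (hf : ∀ i ∈ u, ConcaveOn 𝕜 s (f i)) : ConcaveOn 𝕜 s fun x => ∑ i ∈ u, f i x :=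
  ⟨hs, fun x hx y hy a b ha hb hab => by
    simp only [smul_eq_mul, Finset.mul_sum, ← Finset.sum_add_distrib]
    exact Finset.sum_le_sum fun i hi => (hf i hi).2 hx hy ha hb hab⟩

end Concavity

theorem StrictMonoOn.finset_sum {α ι M : Type*} [Preorder α] [AddCommMonoid M] [PartialOrder M]
    [IsOrderedCancelAddMonoid M] {s : Set α} {f : ι → α → M}
    {u : Finset ι} (hu : u.Nonempty) (hf : ∀ i ∈ u, StrictMonoOn (f i) s) :
    StrictMonoOn (fun x => ∑ i ∈ u, f i x) s :=
  fun _ hx _ hy hxy => Finset.sum_lt_sum_of_nonempty hu fun i hi => hf i hi hx hy hxy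

theorem ConcaveOn.strictConcaveOn_sub_mul {s : Set ℝ} {h : ℝ → ℝ} {T : ℝ}
    (hh : ConcaveOn ℝ s h) (hh' : StrictMonoOn h s) (hT : ∀ x ∈ s, x < T) :
    StrictConcaveOn ℝ s fun x => (T - x) * h x := by
  refine ⟨hh.1, fun x hx y hy hxy a b ha hb hab => ?_⟩
  have hz := hh.1 hx hy ha.le hb.le hab
  simp only [smul_eq_mul] at hz ⊢
  have hTz : 0 < T - (a * x + b * y) := sub_pos.2 (hT _ hz)
  have hjensen : a * h x + b * h y ≤ h (a * x + b * y) := hh.2 hx hy ha.le hb.le hab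
  have hcov : 0 < (x - y) * (h x - h y) := by
    rcases hxy.lt_or_gt with hlt | hlt
    · exact mul_pos_of_neg_of_neg (sub_neg.2 hlt) (sub_neg.2 (hh' hx hy hlt))
    · exact mul_pos (sub_pos.2 hlt) (sub_pos.2 (hh' hy hx hlt))
  calc a * ((T - x) * h x) + b * ((T - y) * h y)
      = (T - (a * x + b * y)) * (a * h x + b * h y) - a * b * ((x - y) * (h x - h y)) := by
        obtain rfl : b = 1 - a := by linarith
        ring
    _ < (T - (a * x + b * y)) * (a * h x + b * h y) := sub_lt_self _ (by positivity)
    _ ≤ (T - (a * x + b * y)) * h (a * x + b * y) := mul_le_mul_of_nonneg_left hjensen hTz.le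

theorem concaveOn_neg_inv_Ioi : ConcaveOn ℝ (Ioi 0) fun t : ℝ => -t⁻¹ :=
  (convexOn_zpow (-1)).neg.congr fun t _ => by simp

theorem monotoneOn_neg_inv_Ioi : MonotoneOn (fun t : ℝ => -t⁻¹) (Ioi 0) :=
  fun _ hx _ _ hxy => neg_le_neg (inv_anti₀ hx hxy)

theorem concaveOn_logb_Ioi {b : ℝ} (hb : 1 ≤ b) : ConcaveOn ℝ (Ioi 0) (logb b) :=
  (strictConcaveOn_log_Ioi.concaveOn.smul (inv_nonneg.2 (log_nonneg hb))).congr fun x _ => by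
    simp [logb, div_eq_inv_mul]

noncomputable def pilotSINR (b c s K₀ L : ℝ) : ℝ := b ^ 2 / (c * (b + s / (L - K₀)))

section PilotSINR

variable {b c s : ℝ} (K₀ : ℝ)

theorem pilotSINR_eq_add_mul_neg_inv (hb : 0 < b) (hc : 0 < c) (hs : 0 < s) {L : ℝ}
    (hL : K₀ < L) :
    pilotSINR b c s K₀ L = b / c + b * s / c * -(b * (L - K₀) + s)⁻¹ := by
  have hx : 0 < L - K₀ := sub_pos.2 hL
  unfold pilotSINR
  field_simp
  ring

theorem pilotSINR_pos (hb : 0 < b) (hc : 0 < c) (hs : 0 < s) {L : ℝ} (hL : K₀ < L) :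
    0 < pilotSINR b c s K₀ L := by
  have hx : 0 < L - K₀ := sub_pos.2 hL
  unfold pilotSINR
  positivity

theorem strictMonoOn_pilotSINR (hb : 0 < b) (hc : 0 < c) (hs : 0 < s) :
    StrictMonoOn (pilotSINR b c s K₀) (Ioi K₀) := by
  intro x hx y hy hxy
  have hx' : 0 < x - K₀ := sub_pos.2 hx
  have hy' : 0 < y - K₀ := sub_pos.2 hy
  unfold pilotSINR
  gcongr

theorem concaveOn_pilotSINR (hb : 0 < b) (hc : 0 < c) (hs : 0 < s) :
    ConcaveOn ℝ (Ioi K₀) (pilotSINR b c s K₀) := by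
  have haffine : ConcaveOn ℝ (Ioi K₀) fun L => b * (L - K₀) + s :=
    ⟨convex_Ioi K₀, fun x _ y _ p q _ _ hpq => le_of_eq <| by
      simp only [smul_eq_mul]; linear_combination (s - b * K₀) * hpq⟩
  have hmaps : MapsTo (fun L => b * (L - K₀) + s) (Ioi K₀) (Ioi 0) := fun L hL => by
    have : 0 < L - K₀ := sub_pos.2 hL
    simp only [mem_Ioi]; positivity
  refine (((concaveOn_neg_inv_Ioi.comp_of_mapsTo monotoneOn_neg_inv_Ioi haffine hmaps).smul
    (by positivity : 0 ≤ b * s / c)).add_const (b / c)).congr fun L hL => ?_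
  simp only [Pi.add_apply, Function.comp_apply, smul_eq_mul,
    pilotSINR_eq_add_mul_neg_inv K₀ hb hc hs hL]
  ring

theorem concaveOn_logb_one_add_pilotSINR (hb : 0 < b) (hc : 0 < c) (hs : 0 < s) :
    ConcaveOn ℝ (Ioi K₀) fun L => logb 2 (1 + pilotSINR b c s K₀ L) :=
  (concaveOn_logb_Ioi one_le_two).comp_of_mapsTo (strictMonoOn_logb one_lt_two).monotoneOn
    (((concaveOn_pilotSINR K₀ hb hc hs).add_const 1).congr fun _ _ => add_comm _ _)
    fun _ hL => add_pos one_pos (pilotSINR_pos K₀ hb hc hs hL)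

theorem strictMonoOn_logb_one_add_pilotSINR (hb : 0 < b) (hc : 0 < c) (hs : 0 < s) :
    StrictMonoOn (fun L => logb 2 (1 + pilotSINR b c s K₀ L)) (Ioi K₀) :=
  (strictMonoOn_logb one_lt_two).comp (fun _ hx _ hy hxy =>
      add_lt_add_right (strictMonoOn_pilotSINR K₀ hb hc hs hx hy hxy) 1)
    fun _ hL => add_pos one_pos (pilotSINR_pos K₀ hb hc hs hL)

end PilotSINR

theorem sum_rate_strictly_concave_in_pilot_length_general
    {ι : Type*} [Fintype ι] [Nonempty ι] (β : ι → ℝ) (hβ : ∀ k, 0 < β k)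
    (T K₀ c s : ℝ) (hT : 0 < T)
    (hc : 0 < c) (hs : 0 < s) :
    StrictConcaveOn ℝ (Set.Ioo K₀ T)
      (fun L : ℝ => ((T - L) / T) *
        ∑ k : ι, Real.logb 2 (1 + (β k) ^ 2 / (c * (β k + s / (L - K₀))))) := by
  set rate : ℝ → ℝ := fun L => T⁻¹ * ∑ k, logb 2 (1 + pilotSINR (β k) c s K₀ L)
  have hconcave : ConcaveOn ℝ (Ioo K₀ T) rate :=
    (ConcaveOn.finset_sum _ (convex_Ioo K₀ T) fun k _ =>
      (concaveOn_logb_one_add_pilotSINR K₀ (hβ k) hc hs).subset Ioo_subset_Ioi_self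
        (convex_Ioo K₀ T)).smul (inv_nonneg.2 hT.le)
  have hmono : StrictMonoOn rate (Ioo K₀ T) := fun _ hx _ hy hxy =>
    mul_lt_mul_of_pos_left
      (StrictMonoOn.finset_sum Finset.univ_nonempty
        (fun k _ => (strictMonoOn_logb_one_add_pilotSINR K₀ (hβ k) hc hs).mono
          Ioo_subset_Ioi_self) hx hy hxy)
      (inv_pos.2 hT)
  convert hconcave.strictConcaveOn_sub_mul hmono fun _ hL => hL.2 using 2 with L
  simp only [rate, pilotSINR]
  ring

/-- The sum-rate function
`g(L) = ((T-L)/T) Σ_k log₂( 1 + β_k² / ( c (β_k + s/(L-K₀)) ) )`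
is strictly concave on the open interval `(K₀, T)`. -/
theorem sum_rate_strictly_concave_in_pilot_length
    {ι : Type*} [Fintype ι] [Nonempty ι] (β : ι → ℝ) (hβ : ∀ k, 0 < β k)
    (T K₀ c s : ℝ) (hT : 0 < T) (hK₀ : 0 ≤ K₀) (hK₀T : K₀ < T)
    (hc : 0 < c) (hs : 0 < s) :
    StrictConcaveOn ℝ (Set.Ioo K₀ T)
      (fun L : ℝ => ((T - L) / T) *
        ∑ k : ι, Real.logb 2 (1 + (β k) ^ 2 / (c * (β k + s / (L - K₀))))) :=
  sum_rate_strictly_concave_in_pilot_length_general β hβ T K₀ c s hT hc hs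
end
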